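/- arXiv:1912.09300 — 2 statements merged into one kernel-verified Lean document; each statement's English description precedes it below -/
import Mathlib

section
/- Let μ̄_n be the measure on ℂ with Lebesgue density ρ_n(z) = (1/π) e^{-n|z|²} Σ_{k=0}^{n-1} (n|z|²)^k / k!. For every fixed ε ∈ (0,1) there exists a constant C > 0 such that for all n ≥ 1: sup |μ̄_n(B_R(z_0)) − μ_∞(B_R(z_0))| ≤ C e^{-n ε²}, where the supremum runs over all open balls B_R(z_0) with B_R(z_0) ⊆ ℂ \ B_{1+ε}(0) or B_R(z_0) ⊆ B_{1-ε}(0). -/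
/-!
With `t = ‖z‖²`, `π ρ_n(z) = e^{-nt} ∑_{k<n} (nt)^k / k!` is a truncated exponential series.
Comparing each term with `t^n n^k / k!` bounds the partial sum by `t^n e^n` when `t ≥ 1` and the
tail by the same quantity when `t ≤ 1`. Hence `π ρ_n` outside the unit disc and `1 - π ρ_n` inside
it are at most `(t e^{1-t})^n ≤ e^{-n(‖z‖-1)²}`, because `r ≤ e^{r-1}`. On a ball inside
`B_{1-ε}` this is uniformly at most `e^{-nε²}` and the ball has area at most `π`; outside
`B_{1+ε}` the exponent `n(‖z‖-1)²` still dominates `nε² + ‖z‖²/2 - 2`, leaving an integrable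
Gaussian.
-/

open MeasureTheory Metric

/-- Density of the mean empirical spectral distribution of a normalized `n × n`
Ginibre matrix: `ρ_n(z) = (1/π) e^{-n|z|²} Σ_{k=0}^{n-1} (n|z|²)^k / k!`. -/
noncomputable def rhoGin (n : ℕ) (z : ℂ) : ℝ :=
  (1 / Real.pi) * Real.exp (-(n : ℝ) * ‖z‖ ^ 2) *
    ∑ k ∈ Finset.range n, ((n : ℝ) * ‖z‖ ^ 2) ^ k / (Nat.factorial k : ℝ)

/-- The mean empirical spectral distribution `μ̄_n` of the Ginibre ensemble. -/
noncomputable def muBarGin (n : ℕ) : Measure ℂ :=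
  volume.withDensity fun z => ENNReal.ofReal (rhoGin n z)

/-- The Circular Law `μ_∞`: uniform distribution on the unit disc. -/
noncomputable def muInf : Measure ℂ :=
  volume.withDensity fun z => ENNReal.ofReal (if ‖z‖ < 1 then 1 / Real.pi else 0)

open Real Finset

section TruncatedExp

variable {a t : ℝ}

lemma mul_pow_div_factorial_le (ha : 0 ≤ a) {k n : ℕ} (ht : t ^ k ≤ t ^ n) :
    (a * t) ^ k / (Nat.factorial k : ℝ) ≤ t ^ n * (a ^ k / (Nat.factorial k : ℝ)) := by
  rw [mul_pow, mul_comm, mul_div_assoc]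
  gcongr

lemma sum_range_mul_pow_div_factorial_le (ha : 0 ≤ a) (ht : 1 ≤ t) (n : ℕ) :
    ∑ k ∈ range n, (a * t) ^ k / (Nat.factorial k : ℝ) ≤ t ^ n * exp a := by
  calc ∑ k ∈ range n, (a * t) ^ k / (Nat.factorial k : ℝ)
      ≤ ∑ k ∈ range n, t ^ n * (a ^ k / (Nat.factorial k : ℝ)) :=
        sum_le_sum fun k hk ↦
          mul_pow_div_factorial_le ha (pow_le_pow_right₀ ht (mem_range.1 hk).le)
    _ = t ^ n * ∑ k ∈ range n, a ^ k / (Nat.factorial k : ℝ) := (mul_sum ..).symm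
    _ ≤ t ^ n * exp a := by gcongr; exact sum_le_exp_of_nonneg ha n

lemma hasSum_pow_div_factorial_nat_add (x : ℝ) (n : ℕ) :
    HasSum (fun k ↦ x ^ (k + n) / (Nat.factorial (k + n) : ℝ))
      (exp x - ∑ k ∈ range n, x ^ k / (Nat.factorial k : ℝ)) :=
  (hasSum_nat_add_iff' n).2 (exp_eq_exp_ℝ ▸ NormedSpace.expSeries_div_hasSum_exp x)

lemma exp_mul_sub_sum_range_le (ha : 0 ≤ a) (ht₀ : 0 ≤ t) (ht₁ : t ≤ 1) (n : ℕ) :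
    exp (a * t) - ∑ k ∈ range n, (a * t) ^ k / (Nat.factorial k : ℝ) ≤ t ^ n * exp a := by
  calc exp (a * t) - ∑ k ∈ range n, (a * t) ^ k / (Nat.factorial k : ℝ)
      ≤ t ^ n * (exp a - ∑ k ∈ range n, a ^ k / (Nat.factorial k : ℝ)) :=
        hasSum_le
          (fun k ↦ mul_pow_div_factorial_le ha (pow_le_pow_of_le_one ht₀ ht₁ (by omega)))
          (hasSum_pow_div_factorial_nat_add _ n)
          ((hasSum_pow_div_factorial_nat_add a n).mul_left _)
    _ ≤ t ^ n * exp a := by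
        gcongr
        exact sub_le_self _ (sum_nonneg fun k _ ↦ by positivity)

end TruncatedExp

lemma exp_neg_mul_sq_mul_pow_le (n : ℕ) {r : ℝ} (hr : 0 ≤ r) :
    exp (-n * r ^ 2) * ((r ^ 2) ^ n * exp n) ≤ exp (-n * (r - 1) ^ 2) := by
  calc exp (-n * r ^ 2) * ((r ^ 2) ^ n * exp n)
      ≤ exp (-n * r ^ 2) * ((exp (r - 1) ^ 2) ^ n * exp n) := by
        gcongr
        linarith [add_one_le_exp (r - 1)]
    _ = exp (-n * (r - 1) ^ 2) := by
        rw [← exp_nat_mul, ← exp_nat_mul, ← exp_add, ← exp_add]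
        congr 1
        push_cast
        ring

lemma lintegral_ofReal_exp_neg_mul_sq_norm {b : ℝ} (hb : 0 < b) :
    ∫⁻ z : ℂ, ENNReal.ofReal (exp (-b * ‖z‖ ^ 2)) = ENNReal.ofReal (π / b) := by
  have hintegral : ∫ z : ℂ, exp (-b * ‖z‖ ^ 2) = π / b := by
    rw [GaussianFourier.integral_rexp_neg_mul_sq_norm hb]
    simp
  rw [← hintegral, ofReal_integral_eq_lintegral_ofReal
    (Integrable.of_integral_ne_zero (by rw [hintegral]; positivity))
    (ae_of_all _ fun _ ↦ (exp_pos _).le)]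

lemma abs_toReal_withDensity_sub_le {α : Type*} [MeasurableSpace α] {μ : Measure α} {s : Set α}
    (hs : MeasurableSet s) (hμs : μ s < ⊤) {f : α → ℝ} (hf : IntegrableOn f s μ)
    (hf0 : ∀ x ∈ s, 0 ≤ f x) {c δ : ℝ} (hfc : ∀ x ∈ s, |f x - c| ≤ δ) :
    |(μ.withDensity (fun x ↦ ENNReal.ofReal (f x)) s).toReal - c * μ.real s| ≤ δ * μ.real s := by
  rw [withDensity_apply _ hs,
    ← ofReal_integral_eq_lintegral_ofReal hf (ae_restrict_of_forall_mem hs hf0),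
    ENNReal.toReal_ofReal (setIntegral_nonneg hs hf0), mul_comm c, ← smul_eq_mul,
    ← setIntegral_const, ← integral_sub hf (integrableOn_const hμs.ne), ← Real.norm_eq_abs]
  exact norm_setIntegral_le_of_norm_le_const hμs fun x hx ↦
    (Real.norm_eq_abs _).trans_le (hfc x hx)

lemma rhoGin_nonneg (n : ℕ) (z : ℂ) : 0 ≤ rhoGin n z := by
  unfold rhoGin
  positivity

lemma rhoGin_continuous (n : ℕ) : Continuous (rhoGin n) := by
  unfold rhoGin
  fun_prop

lemma rhoGin_le (n : ℕ) (z : ℂ) : rhoGin n z ≤ 1 / π := by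
  calc rhoGin n z ≤ 1 / π * exp (-n * ‖z‖ ^ 2) * exp (n * ‖z‖ ^ 2) := by
        unfold rhoGin
        gcongr
        exact sum_le_exp_of_nonneg (by positivity) n
    _ = 1 / π := by rw [mul_assoc, ← exp_add]; simp

lemma rhoGin_le_of_one_le_norm (n : ℕ) {z : ℂ} (hz : 1 ≤ ‖z‖) :
    rhoGin n z ≤ 1 / π * exp (-n * (‖z‖ - 1) ^ 2) := by
  calc rhoGin n z ≤ 1 / π * exp (-n * ‖z‖ ^ 2) * ((‖z‖ ^ 2) ^ n * exp n) := by
        unfold rhoGin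
        gcongr
        exact sum_range_mul_pow_div_factorial_le n.cast_nonneg (one_le_pow₀ hz) n
    _ ≤ 1 / π * exp (-n * (‖z‖ - 1) ^ 2) := by
        rw [mul_assoc]
        gcongr
        exact exp_neg_mul_sq_mul_pow_le n (norm_nonneg z)

lemma abs_rhoGin_sub_le_of_norm_le_one (n : ℕ) {z : ℂ} (hz : ‖z‖ ≤ 1) :
    |rhoGin n z - 1 / π| ≤ 1 / π * exp (-n * (‖z‖ - 1) ^ 2) := by
  rw [abs_sub_comm, abs_of_nonneg (sub_nonneg.2 (rhoGin_le n z))]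
  calc 1 / π - rhoGin n z = 1 / π * exp (-n * ‖z‖ ^ 2) * (exp (n * ‖z‖ ^ 2) -
        ∑ k ∈ range n, ((n : ℝ) * ‖z‖ ^ 2) ^ k / (Nat.factorial k : ℝ)) := by
        rw [rhoGin, mul_sub, mul_assoc _ _ (exp (n * ‖z‖ ^ 2)), ← exp_add]
        simp
    _ ≤ 1 / π * exp (-n * ‖z‖ ^ 2) * ((‖z‖ ^ 2) ^ n * exp n) := by
        gcongr
        exact exp_mul_sub_sum_range_le n.cast_nonneg (by positivity)
          (pow_le_one₀ (norm_nonneg z) hz) n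
    _ ≤ 1 / π * exp (-n * (‖z‖ - 1) ^ 2) := by
        rw [mul_assoc]
        gcongr
        exact exp_neg_mul_sq_mul_pow_le n (norm_nonneg z)

lemma rhoGin_le_of_one_add_le_norm {ε : ℝ} (hε : 0 ≤ ε) (hε1 : ε ≤ 1) {n : ℕ}
    (hn : 1 ≤ n) {z : ℂ} (hz : 1 + ε ≤ ‖z‖) :
    rhoGin n z ≤ exp 2 / π * exp (-n * ε ^ 2) * exp (-(1 / 2) * ‖z‖ ^ 2) := by
  have hn' : (1 : ℝ) ≤ n := by exact_mod_cast hn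
  have hε_sq : ε ^ 2 ≤ (‖z‖ - 1) ^ 2 := pow_le_pow_left₀ hε (by linarith) 2
  -- with `r = ‖z‖`: `n(r-1)² = (n-1)(r-1)² + (r-1)²`, `(r-1)² ≥ ε²` and `(r-1)² ≥ r²/2 - 1`
  have hexponent : -n * (‖z‖ - 1) ^ 2 ≤ 2 + -n * ε ^ 2 + -(1 / 2) * ‖z‖ ^ 2 := by
    nlinarith [mul_le_mul_of_nonneg_left hε_sq (sub_nonneg.2 hn'), sq_nonneg (‖z‖ - 2)]
  calc rhoGin n z ≤ 1 / π * exp (-n * (‖z‖ - 1) ^ 2) :=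
        rhoGin_le_of_one_le_norm n (by linarith)
    _ ≤ 1 / π * exp (2 + -n * ε ^ 2 + -(1 / 2) * ‖z‖ ^ 2) := by gcongr
    _ = exp 2 / π * exp (-n * ε ^ 2) * exp (-(1 / 2) * ‖z‖ ^ 2) := by
        rw [exp_add, exp_add]
        ring

lemma abs_rhoGin_sub_le_of_norm_le_one_sub {ε : ℝ} (hε : 0 ≤ ε) (n : ℕ) {z : ℂ}
    (hz : ‖z‖ ≤ 1 - ε) :
    |rhoGin n z - 1 / π| ≤ 1 / π * exp (-n * ε ^ 2) := by
  calc |rhoGin n z - 1 / π| ≤ 1 / π * exp (-n * (‖z‖ - 1) ^ 2) :=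
        abs_rhoGin_sub_le_of_norm_le_one n (by linarith)
    _ ≤ 1 / π * exp (-n * ε ^ 2) := by
        have hε_sq : ε ^ 2 ≤ (‖z‖ - 1) ^ 2 := by nlinarith [norm_nonneg z]
        gcongr 1 / π * exp ?_
        exact mul_le_mul_of_nonpos_left hε_sq (by simp)

lemma muBarGin_compl_ball_le {ε : ℝ} (hε : 0 ≤ ε) (hε1 : ε ≤ 1) {n : ℕ} (hn : 1 ≤ n) :
    muBarGin n (ball 0 (1 + ε))ᶜ ≤ ENNReal.ofReal (2 * exp 2 * exp (-n * ε ^ 2)) := by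
  calc muBarGin n (ball 0 (1 + ε))ᶜ
      = ∫⁻ z in (ball 0 (1 + ε))ᶜ, ENNReal.ofReal (rhoGin n z) := withDensity_apply' _ _
    _ ≤ ∫⁻ z in (ball 0 (1 + ε))ᶜ, ENNReal.ofReal (exp 2 / π * exp (-n * ε ^ 2)) *
          ENNReal.ofReal (exp (-(1 / 2) * ‖z‖ ^ 2)) :=
        setLIntegral_mono' measurableSet_ball.compl fun z hz ↦ by
          rw [← ENNReal.ofReal_mul (by positivity)]
          refine ENNReal.ofReal_le_ofReal (rhoGin_le_of_one_add_le_norm hε hε1 hn ?_)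
          simpa using hz
    _ ≤ ∫⁻ z, ENNReal.ofReal (exp 2 / π * exp (-n * ε ^ 2)) *
          ENNReal.ofReal (exp (-(1 / 2) * ‖z‖ ^ 2)) :=
        setLIntegral_le_lintegral _ _
    _ = ENNReal.ofReal (2 * exp 2 * exp (-n * ε ^ 2)) := by
        rw [lintegral_const_mul' _ _ ENNReal.ofReal_ne_top,
          lintegral_ofReal_exp_neg_mul_sq_norm (by norm_num),
          ← ENNReal.ofReal_mul (by positivity)]
        congr 1
        field_simp

lemma muInf_compl_ball_one : muInf (ball 0 1)ᶜ = 0 := by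
  rw [muInf, withDensity_apply _ measurableSet_ball.compl]
  refine (setLIntegral_congr_fun measurableSet_ball.compl fun z hz ↦ ?_).trans lintegral_zero
  have : ¬ ‖z‖ < 1 := by simpa using hz
  simp [this]

lemma muInf_apply_of_subset_ball_one {s : Set ℂ} (hs : MeasurableSet s) (hs1 : s ⊆ ball 0 1) :
    muInf s = ENNReal.ofReal (1 / π) * volume s := by
  rw [muInf, withDensity_apply _ hs, ← setLIntegral_const]
  refine setLIntegral_congr_fun hs fun z hz ↦ ?_
  have : ‖z‖ < 1 := by simpa using hs1 hz
  simp [this]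

lemma abs_muBarGin_sub_muInf_le_of_subset_ball {ε : ℝ} (hε : 0 ≤ ε) (n : ℕ) {s : Set ℂ}
    (hs : MeasurableSet s) (hs1 : s ⊆ ball 0 (1 - ε)) :
    |(muBarGin n s).toReal - (muInf s).toReal| ≤ exp (-n * ε ^ 2) := by
  have hs_unit : s ⊆ ball 0 1 := hs1.trans (ball_subset_ball (by linarith))
  have hvol : volume.real s ≤ π := by
    calc volume.real s ≤ volume.real (ball (0 : ℂ) 1) := measureReal_mono hs_unit
      _ = π := by simp [Measure.real, Complex.volume_ball]
  have hρ : IntegrableOn (rhoGin n) s :=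
    ((rhoGin_continuous n).continuousOn.integrableOn_compact (isCompact_closedBall 0 1)).mono_set
      (hs_unit.trans ball_subset_closedBall)
  rw [muInf_apply_of_subset_ball_one hs hs_unit, ENNReal.toReal_mul,
    ENNReal.toReal_ofReal (by positivity), ← measureReal_def]
  calc |(muBarGin n s).toReal - 1 / π * volume.real s|
      ≤ 1 / π * exp (-n * ε ^ 2) * volume.real s :=
        abs_toReal_withDensity_sub_le hs ((measure_mono hs_unit).trans_lt measure_ball_lt_top) hρ
          (fun z _ ↦ rhoGin_nonneg n z) fun z hz ↦
            abs_rhoGin_sub_le_of_norm_le_one_sub hε n (mem_ball_zero_iff.1 (hs1 hz)).le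
    _ ≤ 1 / π * exp (-n * ε ^ 2) * π := by gcongr
    _ = exp (-n * ε ^ 2) := by field_simp

lemma abs_muBarGin_sub_muInf_le_of_subset_compl_ball {ε : ℝ} (hε : 0 ≤ ε) (hε1 : ε ≤ 1)
    {n : ℕ} (hn : 1 ≤ n) {s : Set ℂ} (hs : s ⊆ (ball 0 (1 + ε))ᶜ) :
    |(muBarGin n s).toReal - (muInf s).toReal| ≤ 2 * exp 2 * exp (-n * ε ^ 2) := by
  have hs_unit : s ⊆ (ball 0 1)ᶜ :=
    hs.trans (Set.compl_subset_compl.2 (ball_subset_ball (by linarith)))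
  rw [measure_mono_null hs_unit muInf_compl_ball_one, ENNReal.toReal_zero, sub_zero,
    abs_of_nonneg ENNReal.toReal_nonneg]
  exact ENNReal.toReal_le_of_le_ofReal (by positivity)
    ((measure_mono hs).trans (muBarGin_compl_ball_le hε hε1 hn))

/-- For fixed `ε ∈ (0,1)` there is `C > 0` so that for all `n ≥ 1` and all balls
`B_R(z₀)` contained in `ℂ \ B_{1+ε}(0)` or in `B_{1-ε}(0)`:
`|μ̄_n(B_R(z₀)) − μ_∞(B_R(z₀))| ≤ C e^{-nε²}`. -/
theorem stmt1 (ε : ℝ) (hε : 0 < ε) (hε1 : ε < 1) :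
    ∃ C > 0, ∀ n : ℕ, 1 ≤ n → ∀ (z₀ : ℂ) (R : ℝ),
      (ball z₀ R ⊆ (ball (0 : ℂ) (1 + ε))ᶜ ∨ ball z₀ R ⊆ ball (0 : ℂ) (1 - ε)) →
      |(muBarGin n (ball z₀ R)).toReal - (muInf (ball z₀ R)).toReal| ≤
        C * Real.exp (-(n : ℝ) * ε ^ 2) := by
  refine ⟨2 * exp 2, by positivity, fun n hn z₀ R hB ↦ ?_⟩
  rcases hB with h_outside | h_inside
  · exact abs_muBarGin_sub_muInf_le_of_subset_compl_ball hε.le hε1.le hn h_outside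
  · calc _ ≤ exp (-n * ε ^ 2) :=
          abs_muBarGin_sub_muInf_le_of_subset_ball hε.le n measurableSet_ball h_inside
      _ ≤ 2 * exp 2 * exp (-n * ε ^ 2) :=
          le_mul_of_one_le_left (exp_pos _).le (by linarith [add_one_le_exp 2])
end

section
/- Fix integers m ≥ 1 and n ≥ 1 and let γ_n be the positively oriented boundary of the rectangle with vertices 3/4 − i, n + 1/4 − i, n + 1/4 + i, 3/4 + i. Then for every real x > 0: (1/(2πi)) ∮_{γ_n} x^{t−1} · cot(πt) / Γ(t)^m dt = Σ_{k=0}^{n−1} x^k / (π (k!)^m). -/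
open MeasureTheory

/-- The contour integral over the positively oriented boundary `γ_n` of the rectangle with
vertices `3/4 − i`, `n + 1/4 − i`, `n + 1/4 + i`, `3/4 + i`: the sum of the four integrals
over its oriented sides. -/
noncomputable def rectContour (n : ℕ) (g : ℂ → ℂ) : ℂ :=
  (∫ x in (3 / 4 : ℝ)..((n : ℝ) + 1 / 4), g ((x : ℂ) - Complex.I)) +
    (∫ y in (-1 : ℝ)..(1 : ℝ), g (((n : ℝ) + 1 / 4 : ℝ) + (y : ℂ) * Complex.I) * Complex.I) -
    (∫ x in (3 / 4 : ℝ)..((n : ℝ) + 1 / 4), g ((x : ℂ) + Complex.I)) -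
    (∫ y in (-1 : ℝ)..(1 : ℝ), g ((3 / 4 : ℝ) + (y : ℂ) * Complex.I) * Complex.I)

/-!
The integrand is `G(t) cot(πt)` with `G(t) = x^{t-1} / Γ(t)^m` entire, so inside the rectangle
its only singularities are simple poles at `1, …, n`, with residues `G(k)/π`. Subtracting the
principal parts leaves a function with removable singularities, whose rectangle integral vanishes
by Cauchy–Goursat, while each `(t - k)⁻¹` contributes `2πi`. Finally
`G(k + 1) = x^k / (k!)^m`.
-/

open Complex Set Filter Topology Asymptotics intervalIntegral
open scoped Real Interval

section Removable

variable {E : Type*} [NormedAddCommGroup E] [NormedSpace ℂ E]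

theorem isLittleO_sub_self_inv_of_tendsto_sub_smul {f : ℂ → E} {c : ℂ}
    (h : Tendsto (fun z => (z - c) • f z) (𝓝[≠] c) (𝓝 0)) :
    (fun z => f z - f c) =o[𝓝[≠] c] fun z => (z - c)⁻¹ := by
  have hf : f =o[𝓝[≠] c] fun z => (z - c)⁻¹ := by
    have := (isBigO_refl (fun z => (z - c)⁻¹) (𝓝[≠] c)).smul_isLittleO
      ((isLittleO_one_iff ℂ).2 h)
    refine this.congr' ?_ (by simp)
    filter_upwards [self_mem_nhdsWithin] with z hz
    rw [smul_smul, inv_mul_cancel₀ (sub_ne_zero.2 hz), one_smul]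
  have hinv : Tendsto (fun z => ‖(z - c)⁻¹‖) (𝓝[≠] c) atTop :=
    tendsto_norm_inv_nhdsNE_zero_atTop.comp <|
      tendsto_nhdsWithin_iff.2 ⟨tendsto_sub_nhds_zero_iff.2 nhdsWithin_le_nhds,
        eventually_nhdsWithin_of_forall fun _ hz => sub_ne_zero.2 hz⟩
  exact hf.sub (isLittleO_const_left.2 (Or.inr hinv))

theorem exists_differentiableOn_eqOn_of_tendsto_sub_smul [CompleteSpace E] {f : ℂ → E}
    {U : Set ℂ} {S : Finset ℂ} (hU : IsOpen U) (hf : DifferentiableOn ℂ f (U \ S))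
    (hS : ∀ c ∈ S, Tendsto (fun z => (z - c) • f z) (𝓝[≠] c) (𝓝 0)) :
    ∃ F, DifferentiableOn ℂ F U ∧ EqOn F f (U \ S) := by
  classical
  refine ⟨fun z => if z ∈ S then limUnder (𝓝[≠] z) f else f z, fun z hz => ?_,
    fun z hz => if_neg hz.2⟩
  refine DifferentiableAt.differentiableWithinAt ?_
  by_cases hzS : z ∈ S
  · set V := U \ ((S.erase z : Finset ℂ) : Set ℂ)
    have hV : V ∈ 𝓝 z :=
      (hU.sdiff (S.erase z).finite_toSet.isClosed).mem_nhds (by simp [hz])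
    have hVS : V \ {z} = U \ S := by
      ext u; by_cases u = z <;> simp_all [V]
    have hd := differentiableOn_update_limUnder_of_isLittleO hV (hVS ▸ hf)
      (isLittleO_sub_self_inv_of_tendsto_sub_smul (hS z hzS))
    refine (hd.differentiableAt hV).congr_of_eventuallyEq ?_
    filter_upwards [hV] with u hu
    by_cases huz : u = z
    · simp [huz, hzS]
    · have huS : u ∉ S := fun h => hu.2 (by simpa [huz] using h)
      simp [huz, huS]
  · have hnhds : U \ S ∈ 𝓝 z := (hU.sdiff S.finite_toSet.isClosed).mem_nhds ⟨hz, hzS⟩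
    refine (hf.differentiableAt hnhds).congr_of_eventuallyEq ?_
    filter_upwards [hnhds] with u hu using if_neg hu.2

end Removable

theorem continuousOn_inv_sub {s : Set ℂ} {c : ℂ} (hc : c ∉ s) :
    ContinuousOn (fun u => (u - c)⁻¹) s :=
  (continuousOn_id.sub continuousOn_const).inv₀ fun _ hu =>
    sub_ne_zero.2 (ne_of_mem_of_not_mem hu hc)

section RectIntegral

/-- The integral over the boundary of `Rectangle z w`, positively oriented when `z` is the
lower-left corner, written as in `integral_boundary_rect_eq_zero_of_differentiableOn`. -/
noncomputable def rectIntegral (f : ℂ → ℂ) (z w : ℂ) : ℂ :=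
  (∫ x : ℝ in z.re..w.re, f (x + z.im * I)) - (∫ x : ℝ in z.re..w.re, f (x + w.im * I)) +
    I • (∫ y : ℝ in z.im..w.im, f (w.re + y * I)) -
    I • (∫ y : ℝ in z.im..w.im, f (z.re + y * I))

def rectBoundary (z w : ℂ) : Set ℂ :=
  [[z.re, w.re]] ×ℂ {z.im, w.im} ∪ {z.re, w.re} ×ℂ [[z.im, w.im]]

variable {f g : ℂ → ℂ} {z w c : ℂ}

theorem rectBoundary_subset_rectangle : rectBoundary z w ⊆ Rectangle z w := by
  rintro u (⟨hre, him⟩ | ⟨hre, him⟩)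
  · exact ⟨hre, by rcases him with (h : u.im = z.im) | (h : u.im = w.im) <;> simp [h]⟩
  · exact ⟨by rcases hre with (h : u.re = z.re) | (h : u.re = w.re) <;> simp [h], him⟩

theorem notMem_rectBoundary (hc : c ∈ Ioo z.re w.re ×ℂ Ioo z.im w.im) :
    c ∉ rectBoundary z w := by
  obtain ⟨⟨h₁, h₂⟩, h₃, h₄⟩ := hc
  rintro (⟨-, him⟩ | ⟨hre, -⟩)
  · rcases him with (h : c.im = z.im) | (h : c.im = w.im) <;> linarith
  · rcases hre with (h : c.re = z.re) | (h : c.re = w.re) <;> linarith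

theorem mem_rectBoundary_of_im_mem {x y : ℝ} (hx : x ∈ [[z.re, w.re]])
    (hy : y ∈ ({z.im, w.im} : Set ℝ)) : (x + y * I : ℂ) ∈ rectBoundary z w :=
  Or.inl (by simpa [mem_reProdIm] using ⟨hx, hy⟩)

theorem mem_rectBoundary_of_re_mem {x y : ℝ} (hx : x ∈ ({z.re, w.re} : Set ℝ))
    (hy : y ∈ [[z.im, w.im]]) : (x + y * I : ℂ) ∈ rectBoundary z w :=
  Or.inr (by simpa [mem_reProdIm] using ⟨hx, hy⟩)

theorem intervalIntegrable_horizontal (hf : ContinuousOn f (rectBoundary z w)) {y : ℝ}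
    (hy : y ∈ ({z.im, w.im} : Set ℝ)) :
    IntervalIntegrable (fun x : ℝ => f (x + y * I)) volume z.re w.re :=
  (hf.comp (by fun_prop) fun _ hx => mem_rectBoundary_of_im_mem hx hy).intervalIntegrable

theorem intervalIntegrable_vertical (hf : ContinuousOn f (rectBoundary z w)) {x : ℝ}
    (hx : x ∈ ({z.re, w.re} : Set ℝ)) :
    IntervalIntegrable (fun y : ℝ => f (x + y * I)) volume z.im w.im :=
  (hf.comp (by fun_prop) fun _ hy => mem_rectBoundary_of_re_mem hx hy).intervalIntegrable

theorem rectIntegral_congr (h : EqOn f g (rectBoundary z w)) :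
    rectIntegral f z w = rectIntegral g z w := by
  simp only [rectIntegral]
  rw [integral_congr fun _ hx => h (mem_rectBoundary_of_im_mem hx (by simp)),
    integral_congr fun _ hx => h (mem_rectBoundary_of_im_mem hx (by simp)),
    integral_congr fun _ hy => h (mem_rectBoundary_of_re_mem (by simp) hy),
    integral_congr fun _ hy => h (mem_rectBoundary_of_re_mem (by simp) hy)]

theorem rectIntegral_add (hf : ContinuousOn f (rectBoundary z w))
    (hg : ContinuousOn g (rectBoundary z w)) :
    rectIntegral (fun u => f u + g u) z w = rectIntegral f z w + rectIntegral g z w := by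
  simp only [rectIntegral]
  rw [integral_add (intervalIntegrable_horizontal hf (by simp))
      (intervalIntegrable_horizontal hg (by simp)),
    integral_add (intervalIntegrable_horizontal hf (by simp))
      (intervalIntegrable_horizontal hg (by simp)),
    integral_add (intervalIntegrable_vertical hf (by simp))
      (intervalIntegrable_vertical hg (by simp)),
    integral_add (intervalIntegrable_vertical hf (by simp))
      (intervalIntegrable_vertical hg (by simp))]
  simp only [smul_eq_mul]
  ring

theorem rectIntegral_const_mul (a : ℂ) :
    rectIntegral (fun u => a * f u) z w = a * rectIntegral f z w := by
  simp only [rectIntegral, intervalIntegral.integral_const_mul, smul_eq_mul]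
  ring

theorem rectIntegral_finsetSum {ι : Type*} (s : Finset ι) {F : ι → ℂ → ℂ}
    (hF : ∀ i ∈ s, ContinuousOn (F i) (rectBoundary z w)) :
    rectIntegral (fun u => ∑ i ∈ s, F i u) z w = ∑ i ∈ s, rectIntegral (F i) z w := by
  simp only [rectIntegral]
  rw [integral_finsetSum fun i hi => intervalIntegrable_horizontal (hF i hi) (by simp),
    integral_finsetSum fun i hi => intervalIntegrable_horizontal (hF i hi) (by simp),
    integral_finsetSum fun i hi => intervalIntegrable_vertical (hF i hi) (by simp),
    integral_finsetSum fun i hi => intervalIntegrable_vertical (hF i hi) (by simp)]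
  simp only [Finset.smul_sum, Finset.sum_sub_distrib, Finset.sum_add_distrib]

theorem rectIntegral_eq_zero_of_differentiableOn (hf : DifferentiableOn ℂ f (Rectangle z w)) :
    rectIntegral f z w = 0 :=
  integral_boundary_rect_eq_zero_of_differentiableOn f z w hf

end RectIntegral

section Inverse

theorem integral_horizontal_eq_sub_of_hasDerivAt {f F : ℂ → ℂ} {a b y : ℝ}
    (hF : ∀ x ∈ [[a, b]], HasDerivAt F (f (x + y * I)) (x + y * I))
    (hf : IntervalIntegrable (fun x : ℝ => f (x + y * I)) volume a b) :
    ∫ x in a..b, f (x + y * I) = F (b + y * I) - F (a + y * I) :=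
  integral_eq_sub_of_hasDerivAt (fun x hx => ((hF x hx).comp_add_const _ _).comp_ofReal) hf

theorem smul_integral_vertical_eq_sub_of_hasDerivAt {f F : ℂ → ℂ} {a b x : ℝ}
    (hF : ∀ y ∈ [[a, b]], HasDerivAt F (f (x + y * I)) (x + y * I))
    (hf : IntervalIntegrable (fun y : ℝ => f (x + y * I)) volume a b) :
    I • ∫ y in a..b, f (x + y * I) = F (x + b * I) - F (x + a * I) := by
  rw [smul_eq_mul, mul_comm, ← intervalIntegral.integral_mul_const]
  refine integral_eq_sub_of_hasDerivAt (f := fun y : ℝ => F (x + y * I)) (fun y hy => ?_)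
    (hf.mul_const I)
  have hline : HasDerivAt (fun t : ℂ => (x : ℂ) + t * I) I y := by
    simpa using ((hasDerivAt_id (y : ℂ)).mul_const I).const_add (x : ℂ)
  exact ((hF y hy).comp (y : ℂ) hline).comp_ofReal

theorem log_sub_log_neg_of_im_pos {a : ℂ} (ha : 0 < a.im) : log a - log (-a) = π * I := by
  apply Complex.ext <;> simp [log_re, log_im, arg_neg_eq_arg_sub_pi_of_im_pos ha]

theorem log_sub_log_neg_of_im_neg {a : ℂ} (ha : a.im < 0) : log a - log (-a) = -(π * I) := by
  apply Complex.ext <;> simp [log_re, log_im, arg_neg_eq_arg_add_pi_of_im_neg ha]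

theorem hasDerivAt_log_sub {u c : ℂ} (h : u - c ∈ slitPlane) :
    HasDerivAt (fun u => log (u - c)) (u - c)⁻¹ u := by
  simpa using ((hasDerivAt_id u).sub_const c).clog h

theorem hasDerivAt_log_const_sub {u c : ℂ} (h : c - u ∈ slitPlane) :
    HasDerivAt (fun u => log (c - u)) (u - c)⁻¹ u :=
  (((hasDerivAt_id u).const_sub c).clog h).congr_deriv (by
    rw [id_eq, neg_div, ← div_neg, neg_sub, one_div])

variable {z w c : ℂ}

/-- `log (u - c)` is a primitive of `(u - c)⁻¹` on the bottom, right and top sides, and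
`log (c - u)` on the left side; the two differ by `± π I` at the left corners. -/
theorem rectIntegral_sub_inv (hc : c ∈ Ioo z.re w.re ×ℂ Ioo z.im w.im) :
    rectIntegral (fun u => (u - c)⁻¹) z w = 2 * π * I := by
  have hcont : ContinuousOn (fun u => (u - c)⁻¹) (rectBoundary z w) :=
    continuousOn_inv_sub (notMem_rectBoundary hc)
  obtain ⟨⟨hzr, hwr⟩, hzi, hwi⟩ := hc
  have hB := integral_horizontal_eq_sub_of_hasDerivAt (f := fun u => (u - c)⁻¹)
    (F := fun u => log (u - c))
    (fun _ _ => hasDerivAt_log_sub (by simp [mem_slitPlane_iff, sub_eq_zero, hzi.ne]))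
    (intervalIntegrable_horizontal hcont (y := z.im) (by simp))
  have hT := integral_horizontal_eq_sub_of_hasDerivAt (f := fun u => (u - c)⁻¹)
    (F := fun u => log (u - c))
    (fun _ _ => hasDerivAt_log_sub (by simp [mem_slitPlane_iff, sub_eq_zero, hwi.ne']))
    (intervalIntegrable_horizontal hcont (y := w.im) (by simp))
  have hR := smul_integral_vertical_eq_sub_of_hasDerivAt (f := fun u => (u - c)⁻¹)
    (F := fun u => log (u - c))
    (fun _ _ => hasDerivAt_log_sub (by simp [mem_slitPlane_iff, hwr]))
    (intervalIntegrable_vertical hcont (x := w.re) (by simp))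
  have hL := smul_integral_vertical_eq_sub_of_hasDerivAt (f := fun u => (u - c)⁻¹)
    (F := fun u => log (c - u))
    (fun _ _ => hasDerivAt_log_const_sub (by simp [mem_slitPlane_iff, hzr]))
    (intervalIntegrable_vertical hcont (x := z.re) (by simp))
  have htop := log_sub_log_neg_of_im_pos (a := z.re + w.im * I - c) (by simpa using hwi)
  have hbot := log_sub_log_neg_of_im_neg (a := z.re + z.im * I - c) (by simpa using hzi)
  rw [neg_sub] at htop hbot
  simp only [rectIntegral, hB, hT, hR, hL]
  linear_combination htop - hbot

end Inverse

theorem tendsto_sub_mul_inv_sub (c d : ℂ) :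
    Tendsto (fun u => (u - c) * (u - d)⁻¹) (𝓝[≠] c) (𝓝 (if d = c then 1 else 0)) := by
  split_ifs with h
  · subst h
    exact tendsto_const_nhds.congr'
      (eventually_nhdsWithin_of_forall fun u hu => (mul_inv_cancel₀ (sub_ne_zero.2 hu)).symm)
  · have hcd : c - d ≠ 0 := sub_ne_zero.2 (Ne.symm h)
    have : ContinuousAt (fun u => (u - c) * (u - d)⁻¹) c := by fun_prop (disch := exact hcd)
    simpa using this.tendsto.mono_left nhdsWithin_le_nhds

theorem rectIntegral_eq_two_pi_I_mul_sum_residues {f : ℂ → ℂ} {z w : ℂ} {U : Set ℂ}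
    {S : Finset ℂ} {res : ℂ → ℂ} (hU : IsOpen U) (hzw : Rectangle z w ⊆ U)
    (hS : (S : Set ℂ) ⊆ Ioo z.re w.re ×ℂ Ioo z.im w.im) (hf : DifferentiableOn ℂ f (U \ S))
    (hres : ∀ c ∈ S, Tendsto (fun u => (u - c) * f u) (𝓝[≠] c) (𝓝 (res c))) :
    rectIntegral f z w = 2 * π * I * ∑ c ∈ S, res c := by
  set P : ℂ → ℂ := fun u => ∑ c ∈ S, res c * (u - c)⁻¹
  have hPc : ∀ c ∈ S, ContinuousOn (fun u => res c * (u - c)⁻¹) (U \ S) := fun c hc =>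
    continuousOn_const.mul (continuousOn_inv_sub fun h => h.2 hc)
  have hPd : DifferentiableOn ℂ P (U \ S) := fun u hu =>
    DifferentiableWithinAt.fun_sum fun c hc => (differentiableWithinAt_const _).mul
      ((differentiableWithinAt_id.sub_const c).inv
        (sub_ne_zero.2 (ne_of_mem_of_not_mem hc hu.2).symm))
  have hPres : ∀ c ∈ S, Tendsto (fun u => (u - c) * P u) (𝓝[≠] c) (𝓝 (res c)) := by
    intro c hc
    have := tendsto_finsetSum S fun d _ => (tendsto_sub_mul_inv_sub c d).const_mul (res d)
    simp only [mul_ite, mul_one, mul_zero, Finset.sum_ite_eq', if_pos hc] at this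
    refine this.congr fun u => ?_
    simp only [P, Finset.mul_sum]
    exact Finset.sum_congr rfl fun d _ => by ring
  obtain ⟨F, hFd, hFeq⟩ := exists_differentiableOn_eqOn_of_tendsto_sub_smul hU (hf.sub hPd)
    fun c hc => by simpa [mul_sub] using (hres c hc).sub (hPres c hc)
  have hbd : rectBoundary z w ⊆ U \ S := fun u hu =>
    ⟨hzw (rectBoundary_subset_rectangle hu), fun huS => notMem_rectBoundary (hS huS) hu⟩
  calc rectIntegral f z w = rectIntegral (fun u => F u + P u) z w :=
        rectIntegral_congr fun u hu => by simp [hFeq (hbd hu)]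
    _ = rectIntegral F z w + rectIntegral P z w :=
        rectIntegral_add (hFd.continuousOn.mono (hbd.trans sdiff_subset))
          ((continuousOn_finsetSum S hPc).mono hbd)
    _ = ∑ c ∈ S, res c * (2 * π * I) := by
        rw [rectIntegral_eq_zero_of_differentiableOn (hFd.mono hzw), zero_add,
          rectIntegral_finsetSum S fun c hc => (hPc c hc).mono hbd]
        refine Finset.sum_congr rfl fun c hc => ?_
        rw [rectIntegral_const_mul, rectIntegral_sub_inv (hS hc)]
    _ = 2 * π * I * ∑ c ∈ S, res c := by rw [Finset.mul_sum]; simp only [mul_comm]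

theorem tendsto_sub_mul_div_of_hasDerivAt {g h : ℂ → ℂ} {c g' : ℂ} (hg : HasDerivAt g g' c)
    (hgc : g c = 0) (hg' : g' ≠ 0) (hh : ContinuousAt h c) :
    Tendsto (fun u => (u - c) * (h u / g u)) (𝓝[≠] c) (𝓝 (h c / g')) := by
  have hslope : Tendsto (fun u => g u / (u - c)) (𝓝[≠] c) (𝓝 g') :=
    (hasDerivAt_iff_tendsto_slope.1 hg).congr fun u => by rw [slope_def_field, hgc, sub_zero]
  refine ((hh.tendsto.mono_left nhdsWithin_le_nhds).div hslope hg').congr fun u => ?_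
  rw [Pi.div_apply, div_div_eq_mul_div]
  ring

theorem tendsto_sub_intCast_mul_mul_cot_pi_mul {G : ℂ → ℂ} {k : ℤ} (hG : ContinuousAt G k) :
    Tendsto (fun u => (u - k) * (G u * cot (π * u))) (𝓝[≠] (k : ℂ)) (𝓝 (G k / π)) := by
  have hsin : sin (π * k) = 0 := by rw [mul_comm]; exact sin_int_mul_pi k
  have hcos : cos (π * k) ≠ 0 := fun h => by
    simpa [hsin, h] using sin_sq_add_cos_sq (π * (k : ℂ))
  have hderiv : HasDerivAt (fun u => sin (π * u)) (cos (π * k) * π) k := by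
    simpa using ((hasDerivAt_id (k : ℂ)).const_mul (π : ℂ)).csin
  have := tendsto_sub_mul_div_of_hasDerivAt (h := fun u => G u * cos (π * u)) hderiv hsin
    (mul_ne_zero hcos (ofReal_ne_zero.2 Real.pi_ne_zero))
    (hG.mul (by fun_prop : ContinuousAt (fun u => cos (π * u)) k))
  rw [mul_comm (cos _) (π : ℂ), mul_div_mul_right _ _ hcos] at this
  simpa only [cot_eq_cos_div_sin, mul_div_assoc] using this

theorem differentiableAt_cot_pi_mul {u : ℂ} (hu : ∀ k : ℤ, u ≠ k) :
    DifferentiableAt ℂ (fun t => cot (π * t)) u := by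
  have hsin : sin (π * u) ≠ 0 := fun h => by
    obtain ⟨k, hk⟩ := sin_eq_zero_iff.1 h
    exact hu k (mul_left_cancel₀ (ofReal_ne_zero.2 Real.pi_ne_zero) (hk.trans (mul_comm _ _)))
  simp only [cot_eq_cos_div_sin]
  exact (by fun_prop : DifferentiableAt ℂ (fun t => cos (π * t)) u).div (by fun_prop) hsin

theorem rectContour_eq_rectIntegral (n : ℕ) (g : ℂ → ℂ) :
    rectContour n g = rectIntegral g ⟨3 / 4, -1⟩ ⟨n + 1 / 4, 1⟩ := by
  simp only [rectContour, rectIntegral, smul_eq_mul, ofReal_neg, ofReal_one, neg_mul, one_mul,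
    ← sub_eq_add_neg, intervalIntegral.integral_mul_const]
  ring

theorem intCast_mem_image_range_add_one {n : ℕ} {k : ℤ} (h0 : 0 < k) (hn : (k : ℝ) < n + 1) :
    (k : ℂ) ∈ (Finset.range n).image fun j : ℕ => (j : ℂ) + 1 := by
  have hkn : k ≤ n := Int.lt_add_one_iff.1 (by exact_mod_cast hn)
  lift k to ℕ using h0.le
  obtain ⟨j, rfl⟩ := Nat.exists_eq_add_one.2 (by exact_mod_cast h0)
  exact Finset.mem_image.2 ⟨j, Finset.mem_range.2 (by omega), by push_cast; rfl⟩

theorem rectIntegral_mul_cot_pi_mul {G : ℂ → ℂ} (hG : Differentiable ℂ G) (n : ℕ) :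
    rectIntegral (fun t => G t * cot (π * t)) ⟨3 / 4, -1⟩ ⟨n + 1 / 4, 1⟩ =
      2 * I * ∑ k ∈ Finset.range n, G (k + 1) := by
  set S : Finset ℂ := (Finset.range n).image fun k : ℕ => (k : ℂ) + 1
  set U : Set ℂ := re ⁻¹' Ioo 0 (n + 1)
  have hn : (0 : ℝ) ≤ n := n.cast_nonneg
  have hrect : Rectangle ⟨3 / 4, -1⟩ ⟨n + 1 / 4, 1⟩ ⊆ U := fun u ⟨hre, _⟩ => by
    change u.re ∈ [[(3 / 4 : ℝ), n + 1 / 4]] at hre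
    rcases mem_uIcc.1 hre with ⟨h₁, h₂⟩ | ⟨h₁, h₂⟩ <;>
      exact ⟨by linarith, by linarith⟩
  have hS : (S : Set ℂ) ⊆ Ioo (3 / 4) (n + 1 / 4) ×ℂ Ioo (-1) 1 := by
    intro u hu
    obtain ⟨k, hk, rfl⟩ := Finset.mem_image.1 hu
    have : (k : ℝ) + 1 ≤ n := by exact_mod_cast Finset.mem_range.1 hk
    refine ⟨⟨?_, ?_⟩, ?_, ?_⟩ <;> simp <;> linarith
  have hnotInt : ∀ u ∈ U \ S, ∀ k : ℤ, u ≠ k := by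
    rintro u ⟨huU, huS⟩ k rfl
    have hre : (k : ℝ) ∈ Ioo (0 : ℝ) (n + 1) := by simpa [U] using huU
    exact huS (intCast_mem_image_range_add_one (by exact_mod_cast hre.1) hre.2)
  have hdiff : DifferentiableOn ℂ (fun t => G t * cot (π * t)) (U \ S) := fun u hu =>
    ((hG u).mul (differentiableAt_cot_pi_mul (hnotInt u hu))).differentiableWithinAt
  have hres : ∀ c ∈ S,
      Tendsto (fun u => (u - c) * (G u * cot (π * u))) (𝓝[≠] c) (𝓝 (G c / π)) := by
    intro c hc
    obtain ⟨k, -, rfl⟩ := Finset.mem_image.1 hc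
    simpa using tendsto_sub_intCast_mul_mul_cot_pi_mul (k := k + 1) hG.continuous.continuousAt
  rw [rectIntegral_eq_two_pi_I_mul_sum_residues (isOpen_Ioo.preimage continuous_re) hrect hS
      hdiff hres,
    Finset.sum_image fun _ _ _ _ h => by simpa using h, ← Finset.sum_div]
  field_simp

theorem stmt9_general (m n : ℕ) (x : ℝ) (hx : 0 < x) :
    (1 / (2 * (Real.pi : ℂ) * Complex.I)) *
      rectContour n (fun t =>
        Complex.exp ((t - 1) * (Real.log x : ℂ)) * Complex.cot (Real.pi * t) /
          Complex.Gamma t ^ m) =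
    ∑ k ∈ Finset.range n, (x : ℂ) ^ k / ((Real.pi : ℂ) * (Nat.factorial k : ℂ) ^ m) := by
  set G : ℂ → ℂ := fun t => exp ((t - 1) * Real.log x) / Gamma t ^ m
  have hG : Differentiable ℂ G := by
    have := differentiable_one_div_Gamma
    simp_rw [G, div_eq_mul_inv (exp _), ← inv_pow]
    fun_prop
  have hGk : ∀ k : ℕ, G (k + 1) = (x : ℂ) ^ k / (k.factorial : ℂ) ^ m := fun k => by
    simp only [G]
    rw [add_sub_cancel_right, Gamma_nat_eq_factorial, exp_nat_mul, ← ofReal_exp, Real.exp_log hx]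
  have hintegrand : (fun t => exp ((t - 1) * Real.log x) * cot (π * t) / Gamma t ^ m) =
      fun t => G t * cot (π * t) := funext fun t => by ring
  rw [rectContour_eq_rectIntegral, hintegrand, rectIntegral_mul_cot_pi_mul hG, Finset.mul_sum,
    Finset.mul_sum]
  refine Finset.sum_congr rfl fun k _ => ?_
  rw [hGk]
  field_simp

/-- Residue computation: for `x > 0`,
`(1/(2πi)) ∮_{γ_n} x^{t−1} cot(πt)/Γ(t)^m dt = Σ_{k=0}^{n−1} x^k/(π (k!)^m)`,
where `x^{t−1} := exp((t−1) log x)` with the real logarithm. -/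
theorem stmt9 (m n : ℕ) (hm : 1 ≤ m) (hn : 1 ≤ n) (x : ℝ) (hx : 0 < x) :
    (1 / (2 * (Real.pi : ℂ) * Complex.I)) *
      rectContour n (fun t =>
        Complex.exp ((t - 1) * (Real.log x : ℂ)) * Complex.cot (Real.pi * t) /
          Complex.Gamma t ^ m) =
    ∑ k ∈ Finset.range n, (x : ℂ) ^ k / ((Real.pi : ℂ) * (Nat.factorial k : ℂ) ^ m) :=
  stmt9_general m n x hx
end
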